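/- arXiv:2605.20553 — 5 statements merged into one kernel-verified Lean document; each statement's English description precedes it below -/
import Mathlib

section
/- Fix an integer N ≥ 1, a real p ≥ 1, reals β₀, β₁, λ₁, and λ : Fin N → ℝ with λ_k ≥ λ₁ for all k, and assume (p−1)·β₁² < 2(λ₁ − β₀). Let (Ω, F, P) be a probability space, t > 0, W : Ω → ℝ a random variable whose law is gaussianReal 0 t, and Y₀ : Ω → ℝ^N a random variable independent of W with E(‖Y₀‖^p) < ∞, where ‖·‖ is the Euclidean norm. Define Y : Ω → ℝ^N componentwise by Y(ω)(k) = exp(−(λ_k − β₀)·t + β₁·W(ω) − β₁²·t/2)·Y₀(ω)(k). Then E(‖Y‖^p) ≤ e^{−μ_p·t}·E(‖Y₀‖^p), where μ_p := p(λ₁ − β₀) − (p(p−1)/2)·β₁² > 0. -/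
open Real MeasureTheory ProbabilityTheory

/-!
Each coordinate of `Y` is `Y₀ k` times a geometric Brownian factor, and `λ_k ≥ λ₁` lets all
factors be bounded by the slowest one, so `‖Y‖ ≤ exp (-(λ₁ - β₀) t + β₁ W - β₁² t / 2) ‖Y₀‖`.
Raising to the power `p`, the independence of `Y₀` and `W` splits the expectation, and the
Gaussian moment generating function `E exp (p β₁ W) = exp (p² β₁² t / 2)` turns the Itô
correction `-p β₁² t / 2` into `-(p (p - 1) / 2) β₁² t`, which gives the rate `μ_p`.
-/

theorem EuclideanSpace.norm_le_mul_norm_of_forall_norm_le {ι : Type*} [Fintype ι]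
    {x y : EuclideanSpace ℝ ι} {c : ℝ} (hc : 0 ≤ c) (h : ∀ k, ‖y k‖ ≤ c * ‖x k‖) :
    ‖y‖ ≤ c * ‖x‖ := by
  refine le_of_sq_le_sq ?_ (by positivity)
  rw [EuclideanSpace.norm_sq_eq, mul_pow, EuclideanSpace.norm_sq_eq, Finset.mul_sum]
  gcongr with k
  rw [← mul_pow]
  exact pow_le_pow_left₀ (norm_nonneg _) (h k) 2

theorem rpow_norm_le_of_forall_eq_exp_mul {ι : Type*} [Fintype ι]
    {lam : ι → ℝ} {lam1 t b p : ℝ}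
    (hlam : ∀ k, lam1 ≤ lam k) (ht : 0 ≤ t) (hp : 0 ≤ p) {y y₀ : EuclideanSpace ℝ ι}
    (hy : ∀ k, y k = exp (-lam k * t + b) * y₀ k) :
    ‖y‖ ^ p ≤ exp ((-lam1 * t + b) * p) * ‖y₀‖ ^ p := by
  have hnorm : ‖y‖ ≤ exp (-lam1 * t + b) * ‖y₀‖ := by
    refine EuclideanSpace.norm_le_mul_norm_of_forall_norm_le (exp_pos _).le fun k => ?_
    rw [hy, norm_mul, norm_of_nonneg (exp_pos _).le]
    gcongr
    nlinarith [hlam k]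
  calc ‖y‖ ^ p ≤ (exp (-lam1 * t + b) * ‖y₀‖) ^ p := rpow_le_rpow (norm_nonneg _) hnorm hp
    _ = exp ((-lam1 * t + b) * p) * ‖y₀‖ ^ p := by
      rw [mul_rpow (exp_pos _).le (norm_nonneg _), exp_mul]

theorem integrable_exp_mul_of_map_eq_gaussianReal {Ω : Type*} [MeasurableSpace Ω]
    {P : Measure Ω} [NeZero P] {W : Ω → ℝ} {m : ℝ} {v : NNReal}
    (hW : P.map W = gaussianReal m v) (s : ℝ) :
    Integrable (fun ω => exp (s * W ω)) P :=
  mgf_pos_iff.mp (by rw [mgf_gaussianReal hW]; exact exp_pos _)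

theorem ProbabilityTheory.IndepFun.integral_mul_exp_mul_of_map_eq_gaussianReal
    {Ω : Type*} [MeasurableSpace Ω] {P : Measure Ω} [NeZero P] {X W : Ω → ℝ} {m : ℝ}
    {v : NNReal} (hXW : IndepFun X W P) (hX : Integrable X P)
    (hW : P.map W = gaussianReal m v) (s : ℝ) :
    Integrable (fun ω => X ω * exp (s * W ω)) P ∧
      ∫ ω, X ω * exp (s * W ω) ∂P = (∫ ω, X ω ∂P) * exp (m * s + v * s ^ 2 / 2) := by
  have hexp := integrable_exp_mul_of_map_eq_gaussianReal hW s
  have hindep : IndepFun X (fun ω => exp (s * W ω)) P :=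
    hXW.comp measurable_id (measurable_const_mul s).exp
  refine ⟨hindep.integrable_mul hX hexp, ?_⟩
  rw [hindep.integral_fun_mul_eq_mul_integral hX.aestronglyMeasurable hexp.aestronglyMeasurable,
    ← mgf_gaussianReal hW]
  rfl

theorem galerkin_pth_moment_exponential_stability_general
    {Ω : Type*} [MeasurableSpace Ω] (P : Measure Ω) [IsProbabilityMeasure P]
    (N : ℕ) (p β₀ β₁ lam1 : ℝ) (hp : 1 ≤ p)
    (lam : Fin N → ℝ) (hlam : ∀ k, lam1 ≤ lam k)
    (hcond : (p - 1) * β₁ ^ 2 < 2 * (lam1 - β₀))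
    (t : ℝ) (ht : 0 < t)
    (W : Ω → ℝ)
    (hWlaw : Measure.map W P = gaussianReal 0 ⟨t, ht.le⟩)
    (Y₀ : Ω → EuclideanSpace ℝ (Fin N))
    (hindep : IndepFun Y₀ W P)
    (hY₀int : Integrable (fun ω => ‖Y₀ ω‖ ^ p) P)
    (Y : Ω → EuclideanSpace ℝ (Fin N))
    (hY : ∀ ω k, Y ω k =
      Real.exp (-(lam k - β₀) * t + β₁ * W ω - β₁ ^ 2 * t / 2) * Y₀ ω k)
    : 0 < p * (lam1 - β₀) - p * (p - 1) / 2 * β₁ ^ 2 ∧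
      ∫ ω, ‖Y ω‖ ^ p ∂P ≤
        Real.exp (-(p * (lam1 - β₀) - p * (p - 1) / 2 * β₁ ^ 2) * t) *
          ∫ ω, ‖Y₀ ω‖ ^ p ∂P := by
  have hp0 : 0 < p := by linarith
  refine ⟨by nlinarith, ?_⟩
  set a := -(lam1 - β₀) * t - β₁ ^ 2 * t / 2
  have hpath : ∀ ω, ‖Y ω‖ ^ p ≤ exp (a * p) * (‖Y₀ ω‖ ^ p * exp (p * β₁ * W ω)) := by
    intro ω
    calc ‖Y ω‖ ^ p ≤ exp ((-(lam1 - β₀) * t + (β₁ * W ω - β₁ ^ 2 * t / 2)) * p) * ‖Y₀ ω‖ ^ p :=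
          rpow_norm_le_of_forall_eq_exp_mul (lam := fun k => lam k - β₀)
            (fun k => sub_le_sub_right (hlam k) β₀) ht.le hp0.le
            (fun k => by rw [hY ω k, add_sub_assoc])
      _ = exp (a * p) * (‖Y₀ ω‖ ^ p * exp (p * β₁ * W ω)) := by
          rw [mul_left_comm, ← exp_add, mul_comm]
          congr 2
          ring
  have hindep_pow : IndepFun (fun ω => ‖Y₀ ω‖ ^ p) W P :=
    hindep.comp (measurable_norm.pow_const p) measurable_id
  obtain ⟨hint, hmoment⟩ :=
    hindep_pow.integral_mul_exp_mul_of_map_eq_gaussianReal hY₀int hWlaw (p * β₁)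
  calc ∫ ω, ‖Y ω‖ ^ p ∂P
      ≤ ∫ ω, exp (a * p) * (‖Y₀ ω‖ ^ p * exp (p * β₁ * W ω)) ∂P :=
        integral_mono_of_nonneg (ae_of_all _ fun ω => by positivity) (hint.const_mul _)
          (ae_of_all _ hpath)
    _ = _ := by
        rw [integral_const_mul, hmoment, mul_comm (∫ ω, _ ∂P), ← mul_assoc, ← exp_add]
        congr 2
        change a * p + (0 * (p * β₁) + t * (p * β₁) ^ 2 / 2) = _
        simp only [a]
        ring

/-- Spectral (Galerkin) form of the `p`-th moment exponential stability theorem: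
for the explicit solution at time `t` of the spectral system
`dY_k = -(λ_k - β₀) Y_k dt + β₁ Y_k dW(t)`, under `(p-1) β₁² < 2 (λ₁ - β₀)`
the `p`-th moment decays at rate `μ_p = p (λ₁ - β₀) - (p (p-1)/2) β₁² > 0`. -/
theorem galerkin_pth_moment_exponential_stability
    {Ω : Type*} [MeasurableSpace Ω] (P : Measure Ω) [IsProbabilityMeasure P]
    (N : ℕ) (hN : 1 ≤ N) (p β₀ β₁ lam1 : ℝ) (hp : 1 ≤ p)
    (lam : Fin N → ℝ) (hlam : ∀ k, lam1 ≤ lam k)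
    (hcond : (p - 1) * β₁ ^ 2 < 2 * (lam1 - β₀))
    (t : ℝ) (ht : 0 < t)
    (W : Ω → ℝ) (hWmeas : Measurable W)
    (hWlaw : Measure.map W P = gaussianReal 0 ⟨t, ht.le⟩)
    (Y₀ : Ω → EuclideanSpace ℝ (Fin N)) (hY₀meas : Measurable Y₀)
    (hindep : IndepFun Y₀ W P)
    (hY₀int : Integrable (fun ω => ‖Y₀ ω‖ ^ p) P)
    (Y : Ω → EuclideanSpace ℝ (Fin N))
    (hY : ∀ ω k, Y ω k =
      Real.exp (-(lam k - β₀) * t + β₁ * W ω - β₁ ^ 2 * t / 2) * Y₀ ω k)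
    : 0 < p * (lam1 - β₀) - p * (p - 1) / 2 * β₁ ^ 2 ∧
      ∫ ω, ‖Y ω‖ ^ p ∂P ≤
        Real.exp (-(p * (lam1 - β₀) - p * (p - 1) / 2 * β₁ ^ 2) * t) *
          ∫ ω, ‖Y₀ ω‖ ^ p ∂P :=
  galerkin_pth_moment_exponential_stability_general P N p β₀ β₁ lam1 hp lam hlam hcond t ht W hWlaw
    Y₀ hindep hY₀int Y hY
end

section
/- Let β₁ ∈ ℝ. For each τ > 0 the function x ↦ log|1 + β₁·√τ·x| is integrable with respect to γ = gaussianReal 0 1, and setting ℓ(τ) = ∫ log|1 + β₁·√τ·x| dγ(x), one has ℓ(τ) + (β₁²/2)·τ = o(τ) as τ → 0⁺ (i.e., the left-hand side is little-o of τ in the limit τ → 0 from the right). -/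
/-!
Write `c = β₁ √τ` and `log |1 + u| = u - u²/2 + R(u)`. Since a standard Gaussian `X` has
`E X = 0` and `E X² = 1`, `ℓ(τ) + β₁² τ / 2 = E R(c X)`, so it suffices that
`|E R(c X)| = O(|c|³) = O(τ^{3/2})`. Away from the pole `u = -1` the remainder satisfies
`|R(u)| ≤ 9 |u|³`; the excess `-log |1 + u|` is integrable, and it only matters for
`|u| > 1/2`, i.e. `|X| > 1/(2|c|)`, where the Gaussian density is at most
`exp (-1/(8c²)) = O(c⁴)`.
-/

open Real MeasureTheory ProbabilityTheory Asymptotics Filter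

lemma gaussianPDFReal_zero_one_le_of_le_abs {r x : ℝ} (hr : 0 ≤ r) (hx : r ≤ |x|) :
    gaussianPDFReal 0 1 x ≤ (√(2 * π))⁻¹ * exp (-(r ^ 2 / 2)) := by
  have hsq : r ^ 2 ≤ x ^ 2 := by simpa only [sq_abs] using pow_le_pow_left₀ hr hx 2
  simp only [gaussianPDFReal, NNReal.coe_one, mul_one, sub_zero]
  gcongr
  linarith

lemma gaussianReal_restrict_le_smul_volume {r : ℝ} (hr : 0 ≤ r) :
    (gaussianReal 0 1).restrict {x | r ≤ |x|} ≤
      ENNReal.ofReal ((√(2 * π))⁻¹ * exp (-(r ^ 2 / 2))) • volume := by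
  have hs : MeasurableSet {x : ℝ | r ≤ |x|} := measurableSet_le measurable_const measurable_abs
  rw [gaussianReal_of_var_ne_zero 0 one_ne_zero, restrict_withDensity hs]
  calc (volume.restrict {x | r ≤ |x|}).withDensity (gaussianPDF 0 1)
      ≤ (volume.restrict {x | r ≤ |x|}).withDensity
          fun _ => ENNReal.ofReal ((√(2 * π))⁻¹ * exp (-(r ^ 2 / 2))) := by
        refine withDensity_mono ((ae_restrict_iff' hs).2 (ae_of_all _ fun x hx => ?_))
        exact ENNReal.ofReal_le_ofReal (gaussianPDFReal_zero_one_le_of_le_abs hr hx)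
    _ ≤ _ := by
        rw [withDensity_const]
        gcongr
        exact Measure.restrict_le_self

lemma integrable_gaussianReal_of_support_subset {g : ℝ → ℝ} {r : ℝ} (hr : 0 ≤ r)
    (hg : Integrable g) (hsupp : Function.support g ⊆ {x | r ≤ |x|}) :
    Integrable g (gaussianReal 0 1) :=
  (integrableOn_iff_integrable_of_support_subset hsupp).1 <|
    (hg.smul_measure ENNReal.ofReal_ne_top).mono_measure (gaussianReal_restrict_le_smul_volume hr)

lemma integral_gaussianReal_le_of_support_subset {g : ℝ → ℝ} {r : ℝ} (hr : 0 ≤ r)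
    (hg : Integrable g) (hg0 : 0 ≤ g) (hsupp : Function.support g ⊆ {x | r ≤ |x|}) :
    ∫ x, g x ∂gaussianReal 0 1 ≤ (√(2 * π))⁻¹ * exp (-(r ^ 2 / 2)) * ∫ x, g x := by
  rw [← setIntegral_eq_integral_of_forall_compl_eq_zero fun x hx =>
    Function.notMem_support.1 fun h => hx (hsupp h)]
  calc ∫ x in {x | r ≤ |x|}, g x ∂gaussianReal 0 1
      ≤ ∫ x, g x ∂(ENNReal.ofReal ((√(2 * π))⁻¹ * exp (-(r ^ 2 / 2))) • volume) :=
        integral_mono_measure (gaussianReal_restrict_le_smul_volume hr) (ae_of_all _ hg0)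
          (hg.smul_measure ENNReal.ofReal_ne_top)
    _ = _ := by rw [integral_smul_measure, ENNReal.toReal_ofReal (by positivity), smul_eq_mul]

lemma integrable_pow_gaussianReal (n : ℕ) : Integrable (fun x => x ^ n) (gaussianReal 0 1) := by
  refine (memLp_id_gaussianReal (μ := 0) (v := 1) n).integrable_norm_pow'.mono'
    (by fun_prop) (ae_of_all _ fun x => ?_)
  simp

lemma integral_sq_gaussianReal : ∫ x, x ^ 2 ∂gaussianReal 0 1 = 1 := by
  have h := variance_eq_sub (memLp_id_gaussianReal (μ := 0) (v := 1) 2)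
  simp only [variance_id_gaussianReal, NNReal.coe_one, Pi.pow_apply, id_eq,
    integral_id_gaussianReal, ne_eq, OfNat.ofNat_ne_zero, not_false_eq_true, zero_pow,
    sub_zero] at h
  linarith

lemma exp_neg_le_two_div_sq {y : ℝ} (hy : 0 < y) : exp (-y) ≤ 2 / y ^ 2 := by
  have h := pow_div_factorial_le_exp y hy.le 2
  rw [exp_neg, inv_le_comm₀ (exp_pos y) (by positivity), inv_div]
  simpa using h

noncomputable def logTaylorRem (u : ℝ) : ℝ := log |1 + u| - u + u ^ 2 / 2

/-- `-log |1 + u|` on the range `|u| > 1/2`, `|1 + u| < 1`, where the pole at `u = -1` keeps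
`logTaylorRem u` from being dominated by `9 |u|³`. -/
noncomputable def logPolePart (u : ℝ) : ℝ :=
  (Set.Ioo (-2) (-1 / 2)).indicator (fun u => -log |1 + u|) u

lemma logPolePart_zero : logPolePart 0 = 0 :=
  Set.indicator_of_notMem (by norm_num) _

lemma logPolePart_nonneg (u : ℝ) : 0 ≤ logPolePart u := by
  refine Set.indicator_nonneg (fun v hv => ?_) u
  have : |1 + v| ≤ 1 := abs_le.2 ⟨by linarith [hv.1], by linarith [hv.2]⟩
  exact neg_nonneg.2 (log_nonpos (abs_nonneg _) this)

lemma abs_logTaylorRem_le_of_abs_le_half {u : ℝ} (hu : |u| ≤ 1 / 2) :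
    |logTaylorRem u| ≤ 2 * |u| ^ 3 := by
  have h1 : |(-u)| < 1 := by rw [abs_neg]; linarith
  have hpos : 0 < 1 + u := by linarith [neg_abs_le u]
  have h := abs_log_sub_add_sum_range_le h1 2
  simp only [Finset.sum_range_succ, Finset.sum_range_zero, abs_neg, sub_neg_eq_add] at h
  rw [logTaylorRem, abs_of_pos hpos]
  calc |log (1 + u) - u + u ^ 2 / 2|
      = |0 + (-u) ^ (0 + 1) / ((0 : ℕ) + 1) + (-u) ^ (1 + 1) / ((1 : ℕ) + 1) + log (1 + u)| := by
        congr 1; push_cast; ring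
    _ ≤ |u| ^ (2 + 1) / (1 - |u|) := h
    _ ≤ 2 * |u| ^ 3 := by
        rw [div_le_iff₀ (by linarith), show 2 + 1 = 3 from rfl]
        nlinarith [pow_nonneg (abs_nonneg u) 3]

lemma abs_logTaylorRem_le (u : ℝ) : |logTaylorRem u| ≤ 9 * |u| ^ 3 + logPolePart u := by
  rcases le_or_gt |u| (1 / 2) with hu | hu
  · linarith [abs_logTaylorRem_le_of_abs_le_half hu, logPolePart_nonneg u,
      pow_nonneg (abs_nonneg u) 3]
  have hpoly : 2 * |u| + u ^ 2 / 2 ≤ 9 * |u| ^ 3 := by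
    nlinarith [sq_abs u, abs_nonneg u]
  have htri : |logTaylorRem u| ≤ |(log |1 + u|)| + |u| + u ^ 2 / 2 := by
    have := abs_add_three (log |1 + u|) (-u) (u ^ 2 / 2)
    rw [abs_neg, abs_of_nonneg (by positivity : 0 ≤ u ^ 2 / 2)] at this
    simpa [logTaylorRem, sub_eq_add_neg] using this
  by_cases hpole : u ∈ Set.Ioo (-2) (-1 / 2)
  · have hlog : log |1 + u| ≤ 0 :=
      log_nonpos (abs_nonneg _) (abs_le.2 ⟨by linarith [hpole.1], by linarith [hpole.2]⟩)
    rw [abs_of_nonpos hlog] at htri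
    rw [logPolePart, Set.indicator_of_mem hpole]
    linarith
  · have hone : 1 ≤ |1 + u| := by
      rw [Set.mem_Ioo, not_and_or, not_lt, not_lt] at hpole
      rcases hpole with h | h
      · exact le_abs.2 (Or.inr (by linarith))
      · exact le_abs.2 (Or.inl (by cases abs_cases u <;> linarith))
    have hlog : log |1 + u| ≤ |u| := by
      linarith [log_le_sub_one_of_pos (by linarith : 0 < |1 + u|), abs_add_le (1 : ℝ) u,
        abs_one (α := ℝ)]
    rw [abs_of_nonneg (log_nonneg hone)] at htri
    rw [logPolePart, Set.indicator_of_notMem hpole]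
    linarith

lemma integrable_logPolePart : Integrable logPolePart := by
  change Integrable ((Set.Ioo (-2) (-1 / 2)).indicator fun u => -log |1 + u|)
  rw [integrable_indicator_iff measurableSet_Ioo]
  have h : IntervalIntegrable (fun u => log (u + 1)) volume (-2) (-1 / 2) := by
    convert (intervalIntegral.intervalIntegrable_log' (a := -1) (b := 1 / 2)).comp_add_right 1
      using 2 <;> norm_num
  refine ((intervalIntegrable_iff_integrableOn_Ioo_of_le (by norm_num)).1 h).neg.congr_fun
    (fun u _ => ?_) measurableSet_Ioo
  simp only [Pi.neg_apply, log_abs, add_comm]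

lemma support_logPolePart_comp_mul (c : ℝ) :
    Function.support (fun x => logPolePart (c * x)) ⊆ {x | 1 / (2 * |c|) ≤ |x|} := by
  intro x hx
  have hmem := Set.mem_of_indicator_ne_zero hx
  have hcx : 1 / 2 < |c| * |x| := by
    rw [← abs_mul]; exact lt_abs.2 (Or.inr (by linarith [hmem.2]))
  rcases (abs_nonneg c).eq_or_lt with hc | hc
  · simp [← hc]
  · rw [Set.mem_ofPred_eq, div_le_iff₀ (by positivity)]
    linarith

lemma integrable_logPolePart_comp_mul (c : ℝ) :
    Integrable (fun x => logPolePart (c * x)) (gaussianReal 0 1) := by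
  rcases eq_or_ne c 0 with rfl | hc
  · simp [logPolePart_zero]
  exact integrable_gaussianReal_of_support_subset (by positivity)
    (integrable_logPolePart.comp_mul_left' hc) (support_logPolePart_comp_mul c)

lemma integral_logPolePart_comp_mul_le (c : ℝ) :
    ∫ x, logPolePart (c * x) ∂gaussianReal 0 1 ≤
      128 * (√(2 * π))⁻¹ * (∫ u, logPolePart u) * |c| ^ 3 := by
  rcases eq_or_ne c 0 with rfl | hc
  · simp [logPolePart_zero]
  have hc' : 0 < |c| := abs_pos.2 hc
  have hexp : exp (-((1 / (2 * |c|)) ^ 2 / 2)) ≤ 128 * |c| ^ 4 := by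
    refine (exp_neg_le_two_div_sq (by positivity)).trans_eq ?_
    field_simp
    ring
  have hL : 0 ≤ ∫ u, logPolePart u := integral_nonneg logPolePart_nonneg
  calc ∫ x, logPolePart (c * x) ∂gaussianReal 0 1
      ≤ (√(2 * π))⁻¹ * exp (-((1 / (2 * |c|)) ^ 2 / 2)) * ∫ x, logPolePart (c * x) :=
        integral_gaussianReal_le_of_support_subset (by positivity)
          (integrable_logPolePart.comp_mul_left' hc) (fun x => logPolePart_nonneg _)
          (support_logPolePart_comp_mul c)
    _ = (√(2 * π))⁻¹ * exp (-((1 / (2 * |c|)) ^ 2 / 2)) * (|c|⁻¹ * ∫ u, logPolePart u) := by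
        rw [Measure.integral_comp_mul_left, abs_inv, smul_eq_mul]
    _ ≤ (√(2 * π))⁻¹ * (128 * |c| ^ 4) * (|c|⁻¹ * ∫ u, logPolePart u) := by gcongr
    _ = 128 * (√(2 * π))⁻¹ * (∫ u, logPolePart u) * |c| ^ 3 := by field_simp

lemma integrable_logTaylorRem_comp_mul (c : ℝ) :
    Integrable (fun x => logTaylorRem (c * x)) (gaussianReal 0 1) := by
  refine (((integrable_pow_gaussianReal 3).abs.const_mul (9 * |c| ^ 3)).add
    (integrable_logPolePart_comp_mul c)).mono' (by unfold logTaylorRem; fun_prop)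
    (ae_of_all _ fun x => ?_)
  simpa [abs_mul, mul_pow, abs_pow, mul_assoc] using abs_logTaylorRem_le (c * x)

lemma exists_abs_integral_logTaylorRem_comp_mul_le :
    ∃ K, ∀ c : ℝ, |∫ x, logTaylorRem (c * x) ∂gaussianReal 0 1| ≤ K * |c| ^ 3 := by
  set M := ∫ x, |x ^ 3| ∂gaussianReal 0 1
  refine ⟨9 * M + 128 * (√(2 * π))⁻¹ * ∫ u, logPolePart u, fun c => ?_⟩
  have hmoment := (integrable_pow_gaussianReal 3).abs.const_mul (9 * |c| ^ 3)
  calc |∫ x, logTaylorRem (c * x) ∂gaussianReal 0 1|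
      ≤ ∫ x, |logTaylorRem (c * x)| ∂gaussianReal 0 1 := abs_integral_le_integral_abs
    _ ≤ ∫ x, (9 * |c| ^ 3 * |x ^ 3| + logPolePart (c * x)) ∂gaussianReal 0 1 := by
        refine integral_mono (integrable_logTaylorRem_comp_mul c).abs
          (hmoment.add (integrable_logPolePart_comp_mul c)) fun x => ?_
        simpa [abs_mul, mul_pow, abs_pow, mul_assoc] using abs_logTaylorRem_le (c * x)
    _ = 9 * |c| ^ 3 * M + ∫ x, logPolePart (c * x) ∂gaussianReal 0 1 := by
        rw [integral_add hmoment (integrable_logPolePart_comp_mul c), integral_const_mul]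
    _ ≤ _ := by linarith [integral_logPolePart_comp_mul_le c]

lemma integrable_log_abs_one_add_mul (c : ℝ) :
    Integrable (fun x => log |1 + c * x|) (gaussianReal 0 1) := by
  refine (((integrable_logTaylorRem_comp_mul c).add
    ((integrable_pow_gaussianReal 1).const_mul c)).sub
    ((integrable_pow_gaussianReal 2).const_mul (c ^ 2 / 2))).congr (ae_of_all _ fun x => ?_)
  simp only [logTaylorRem, Pi.add_apply, Pi.sub_apply]
  ring

lemma integral_logTaylorRem_comp_mul (c : ℝ) :
    ∫ x, logTaylorRem (c * x) ∂gaussianReal 0 1 =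
      ∫ x, log |1 + c * x| ∂gaussianReal 0 1 + c ^ 2 / 2 := by
  have hexpand : (fun x => logTaylorRem (c * x)) =
      fun x => log |1 + c * x| - c * x + c ^ 2 / 2 * x ^ 2 := by
    funext x; simp only [logTaylorRem]; ring
  have hlin : Integrable (fun x => c * x) (gaussianReal 0 1) := by
    simpa using (integrable_pow_gaussianReal 1).const_mul c
  have hlog_sub : Integrable (fun x => log |1 + c * x| - c * x) (gaussianReal 0 1) :=
    (integrable_log_abs_one_add_mul c).sub hlin
  rw [hexpand, integral_add hlog_sub ((integrable_pow_gaussianReal 2).const_mul _),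
    integral_sub (integrable_log_abs_one_add_mul c) hlin, integral_const_mul,
    integral_const_mul, integral_id_gaussianReal, integral_sq_gaussianReal]
  ring

/-- One-step logarithmic expansion for the Euler–Maruyama scheme: with
`ℓ(τ) = E(log|1 + β₁ ΔW|)`, `ΔW ∼ N(0, τ)`, the integrand is integrable for
every `τ > 0` and `ℓ(τ) = -(β₁²/2) τ + o(τ)` as `τ → 0⁺`. -/
theorem one_step_log_moment_expansion (β₁ : ℝ) :
    (∀ τ : ℝ, 0 < τ →
      Integrable (fun x => Real.log |1 + β₁ * Real.sqrt τ * x|)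
        (gaussianReal 0 1)) ∧
    (fun τ : ℝ =>
        (∫ x, Real.log |1 + β₁ * Real.sqrt τ * x| ∂(gaussianReal 0 1)) +
          β₁ ^ 2 / 2 * τ)
      =o[nhdsWithin 0 (Set.Ioi 0)] (fun τ : ℝ => τ) := by
  refine ⟨fun τ _ => integrable_log_abs_one_add_mul (β₁ * √τ), ?_⟩
  obtain ⟨K, hK⟩ := exists_abs_integral_logTaylorRem_comp_mul_le
  have hsqrt : (fun τ : ℝ => √τ) =o[nhdsWithin 0 (Set.Ioi 0)] (fun _ => (1 : ℝ)) :=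
    (isLittleO_one_iff ℝ).2 <| by
      simpa using (continuous_sqrt.tendsto 0).mono_left nhdsWithin_le_nhds
  have hsmall : (fun τ : ℝ => τ * √τ) =o[nhdsWithin 0 (Set.Ioi 0)] (fun τ => τ) := by
    simpa using (isBigO_refl (fun τ : ℝ => τ) _).mul_isLittleO hsqrt
  refine IsBigO.trans_isLittleO (IsBigO.of_bound (K * |β₁| ^ 3) ?_) hsmall
  filter_upwards [self_mem_nhdsWithin] with τ (hτ : 0 < τ)
  have hsq : (β₁ * √τ) ^ 2 = β₁ ^ 2 * τ := by rw [mul_pow, sq_sqrt hτ.le]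
  have hcube : |β₁ * √τ| ^ 3 = |β₁| ^ 3 * (τ * √τ) := by
    rw [abs_mul, abs_of_nonneg (sqrt_nonneg τ), mul_pow, pow_succ √τ 2, sq_sqrt hτ.le]
  calc ‖∫ x, log |1 + β₁ * √τ * x| ∂gaussianReal 0 1 + β₁ ^ 2 / 2 * τ‖
      = |∫ x, logTaylorRem (β₁ * √τ * x) ∂gaussianReal 0 1| := by
        rw [integral_logTaylorRem_comp_mul, hsq, Real.norm_eq_abs]; ring_nf
    _ ≤ K * |β₁ * √τ| ^ 3 := hK _
    _ = K * |β₁| ^ 3 * ‖τ * √τ‖ := by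
        rw [hcube, Real.norm_of_nonneg (by positivity)]; ring
end

section
/- Fix an integer N ≥ 1, a real p ≥ 1, reals β₀, β₁, λ₁, and λ : Fin N → ℝ with λ_k ≥ λ₁ for all k, and assume β₁² > 2(β₀ − λ₁). Then there exists τ₀ > 0 such that for every τ ∈ (0, τ₀) with 1 + τ(λ_k − β₀) > 0 for all k, the following holds. On any probability space carrying a sequence (ΔW_n)_{n∈ℕ} of real random variables each with law gaussianReal 0 τ and a measurable Y₀ : Ω → ℝ^N such that the family (Y₀, ΔW₀, ΔW₁, …) is mutually independent, define recursively Y_{n+1}(k) = (Y_n(k) + β₁·ΔW_n·Y_n(k))/(1 + τ(λ_k − β₀)) for all n ∈ ℕ and k. Then there exists a random variable ξ : Ω → [0, ∞) that is almost surely finite such that, almost surely, ‖Y_n‖^p ≤ ξ·e^{−(μ_as/4)·nτ} for all n ∈ ℕ, where μ_as := (p/2)·β₁² + p(λ₁ − β₀). -/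
/-!
Coordinatewise the scheme multiplies `Y_n(k)` by `(1 + β₁ΔW_n) / (1 + τ(λ_k - β₀))`, so with
`d = 1 + τ(λ₁ - β₀)` we get `‖Y_n‖ ≤ ‖Y₀‖ exp (∑_{j<n} (log |1 + β₁ΔW_j| - log d))`. By the strong
law of large numbers the average of `log |1 + β₁ΔW_j|` tends almost surely to its mean, which the
expansion `log |1 + u| ≤ u - u²/2 + 2|u|³` bounds by `-β₁²τ/2 + O(τ^{3/2})`. As
`log d = τ(λ₁ - β₀) + O(τ²)`, for small `τ` the exponent drifts to `-∞` faster than `nκτ` for any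
`κ < β₁²/2 + λ₁ - β₀`, the quantity made positive by the noise condition. Taking `κ` a quarter of
that rate, the supremum `M` over `n` of the exponent plus `nκτ` is almost surely finite, and
`ξ = ‖Y₀‖^p exp (p M)`.
-/

open Real MeasureTheory ProbabilityTheory

/-- Mutual independence of the joint family `(Y₀, ΔW₀, ΔW₁, …)`. -/
def MutuallyIndepInit {Ω : Type*} [MeasurableSpace Ω] {N : ℕ}
    (P : Measure Ω) (Y₀ : Ω → EuclideanSpace ℝ (Fin N)) (ΔW : ℕ → Ω → ℝ) :
    Prop :=
  iIndepFun
    (β := fun i : Option ℕ => Option.elim i (EuclideanSpace ℝ (Fin N)) fun _ => ℝ)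
    (m := fun i => match i with
      | none => (inferInstance : MeasurableSpace (EuclideanSpace ℝ (Fin N)))
      | some _ => (inferInstance : MeasurableSpace ℝ))
    (fun i => match i with
      | none => Y₀
      | some n => ΔW n) P

open Filter Set Topology
open scoped ENNReal NNReal

lemma abs_log_one_add_sub_self_le {u : ℝ} (hu : |u| ≤ 1 / 2) :
    |log (1 + u) - u| ≤ 2 * u ^ 2 := by
  have h := abs_log_sub_add_sum_range_le (x := -u) (by rw [abs_neg]; linarith) 1
  norm_num at h
  rw [show log (1 + u) - u = -u + log (1 + u) by ring]
  refine h.trans ?_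
  rw [div_le_iff₀ (by linarith)]
  nlinarith [sq_nonneg u]

lemma log_abs_one_add_le (u : ℝ) : log |1 + u| ≤ u - u ^ 2 / 2 + 2 * |u| ^ 3 := by
  rcases le_or_gt |u| (1 / 2) with hu | hu
  · have h := abs_log_sub_add_sum_range_le (x := -u) (by rw [abs_neg]; linarith) 2
    norm_num [Finset.sum_range_succ] at h
    have hcube : |u| ^ 3 / (1 - |u|) ≤ 2 * |u| ^ 3 := by
      rw [div_le_iff₀ (by linarith)]
      nlinarith [pow_nonneg (abs_nonneg u) 3]
    rw [abs_of_pos (by linarith [neg_abs_le u] : 0 < 1 + u)]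
    linarith [(abs_le.1 h).2]
  -- away from `0` the cubic term dominates `log |1 + u| ≤ |1 + u| - 1`
  rcases eq_or_ne (1 + u) 0 with h0 | h0
  · obtain rfl : u = -1 := by linarith
    norm_num
  suffices |1 + u| - 1 ≤ u - u ^ 2 / 2 + 2 * |u| ^ 3 by
    linarith [log_le_sub_one_of_pos (abs_pos.2 h0)]
  rcases le_or_gt 0 u with hpos | hneg
  · rw [abs_of_nonneg hpos] at hu ⊢
    rw [abs_of_pos (by linarith)]
    nlinarith
  · rw [abs_of_neg hneg] at hu ⊢
    rcases lt_or_gt_of_ne h0 with hlt | hgt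
    · rw [abs_of_neg hlt]; nlinarith
    · rw [abs_of_pos hgt]; nlinarith

lemma abs_log_le_abs {y : ℝ} (hy : 1 ≤ |y|) : |log y| ≤ |y| := by
  rw [← log_abs, abs_of_nonneg (log_nonneg hy)]
  linarith [log_le_sub_one_of_pos (by linarith : 0 < |y|)]

lemma abs_le_exp_log_abs (z : ℝ) : |z| ≤ exp (log |z|) := by
  rcases eq_or_ne z 0 with rfl | hz
  · simp
  · rw [exp_log (abs_pos.2 hz)]

lemma gaussianReal_le_smul_volume (μ : ℝ) {v : ℝ≥0} (hv : v ≠ 0) :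
    gaussianReal μ v ≤ ENNReal.ofReal (√(2 * π * v))⁻¹ • volume := by
  rw [gaussianReal_of_var_ne_zero μ hv, ← withDensity_const]
  refine withDensity_mono (ae_of_all _ fun x => ENNReal.ofReal_le_ofReal ?_)
  rw [gaussianPDFReal_def]
  refine mul_le_of_le_one_right (by positivity) (exp_le_one_iff.2 ?_)
  have : 0 ≤ (x - μ) ^ 2 / (2 * v) := by positivity
  linarith [neg_div (2 * (v : ℝ)) ((x - μ) ^ 2)]

lemma integrable_log_gaussianReal (μ : ℝ) {v : ℝ≥0} (hv : v ≠ 0) :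
    Integrable log (gaussianReal μ v) := by
  rw [← integrableOn_univ, ← union_compl_self (Icc (-1 : ℝ) 1)]
  refine IntegrableOn.union ?_ ?_
  · have h : IntegrableOn log (Icc (-1) 1) := by
      rw [integrableOn_Icc_iff_integrableOn_Ioc,
        ← intervalIntegrable_iff_integrableOn_Ioc_of_le (by norm_num)]
      exact intervalIntegral.intervalIntegrable_log'
    refine h.of_measure_le_smul (ENNReal.ofReal_ne_top (r := (√(2 * π * v))⁻¹)) ?_
    rw [← Measure.restrict_smul]
    exact Measure.restrict_mono subset_rfl (gaussianReal_le_smul_volume μ hv)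
  · have hid : Integrable (fun y => ‖y‖) (gaussianReal μ v) :=
      (memLp_one_iff_integrable.1 (memLp_id_gaussianReal 1)).norm
    refine hid.integrableOn.mono' measurable_log.aestronglyMeasurable
      ((ae_restrict_iff' measurableSet_Icc.compl).2 (ae_of_all _ fun y hy => ?_))
    have : 1 ≤ |y| := by
      by_contra! h
      exact hy (abs_le.1 h.le)
    simpa using abs_log_le_abs this

lemma integrable_log_abs_one_add_mul_gaussianReal (μ β : ℝ) {v : ℝ≥0} (hv : v ≠ 0) :
    Integrable (fun x => log |1 + β * x|) (gaussianReal μ v) := by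
  rcases eq_or_ne β 0 with rfl | hβ
  · simp
  have hmap : (gaussianReal μ v).map (fun x => 1 + β * x)
      = gaussianReal (1 + β * μ) (.mk (β ^ 2) (sq_nonneg β) * v) := by
    rw [show (fun x => 1 + β * x) = (1 + ·) ∘ (β * ·) from rfl,
      ← Measure.map_map (measurable_const_add 1) (measurable_const_mul β),
      gaussianReal_map_const_mul, gaussianReal_map_const_add, add_comm]
  have hv' : NNReal.mk (β ^ 2) (sq_nonneg β) * v ≠ 0 :=
    mul_ne_zero (by simpa [← NNReal.coe_ne_zero] using hβ) hv
  have h := integrable_log_gaussianReal (1 + β * μ) hv'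
  rw [← hmap, integrable_map_measure measurable_log.aestronglyMeasurable (by fun_prop)] at h
  simpa only [Function.comp_def, log_abs] using h

lemma integral_abs_pow_three_gaussianReal (v : ℝ≥0) :
    ∫ x, |x| ^ 3 ∂gaussianReal 0 v = √v ^ 3 * ∫ x, |x| ^ 3 ∂gaussianReal 0 1 := by
  have hv : .mk (√(v : ℝ) ^ 2) (sq_nonneg _) * 1 = v := by ext; simp
  have hmap : (gaussianReal 0 1).map (√v * ·) = gaussianReal 0 v := by
    rw [gaussianReal_map_const_mul, mul_zero, hv]
  rw [← hmap, integral_map (by fun_prop) (by fun_prop), ← integral_const_mul]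
  simp_rw [abs_mul, mul_pow, abs_of_nonneg (sqrt_nonneg _)]

lemma integral_log_abs_one_add_mul_gaussianReal_le (β : ℝ) {v : ℝ≥0} (hv : v ≠ 0) :
    ∫ x, log |1 + β * x| ∂gaussianReal 0 v
      ≤ -(β ^ 2 * v / 2) + 2 * |β| ^ 3 * √v ^ 3 * ∫ x, |x| ^ 3 ∂gaussianReal 0 1 := by
  have h1 : Integrable (fun x : ℝ => β * x) (gaussianReal 0 v) :=
    (memLp_one_iff_integrable.1 (memLp_id_gaussianReal 1)).const_mul β
  have h2 : Integrable (fun x : ℝ => β ^ 2 / 2 * x ^ 2) (gaussianReal 0 v) :=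
    (memLp_id_gaussianReal 2).integrable_sq.const_mul _
  have h3 : Integrable (fun x : ℝ => 2 * |β| ^ 3 * |x| ^ 3) (gaussianReal 0 v) := by
    simpa using ((memLp_id_gaussianReal (μ := 0) (v := v) 3).integrable_norm_pow').const_mul
      (2 * |β| ^ 3)
  have hsecond : ∫ x, x ^ 2 ∂gaussianReal 0 v = v := by
    simpa [integral_id_gaussianReal] using
      (variance_eq_integral measurable_id.aemeasurable).symm.trans
        (variance_id_gaussianReal (μ := 0) (v := v))
  calc ∫ x, log |1 + β * x| ∂gaussianReal 0 v
      ≤ ∫ x, (β * x - β ^ 2 / 2 * x ^ 2 + 2 * |β| ^ 3 * |x| ^ 3) ∂gaussianReal 0 v := by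
        refine integral_mono (integrable_log_abs_one_add_mul_gaussianReal 0 β hv)
          ((h1.sub h2).add h3) fun x => ?_
        have := log_abs_one_add_le (β * x)
        rw [abs_mul, mul_pow, mul_pow] at this
        linarith
    _ = _ := by
        rw [integral_add (f := fun x => β * x - β ^ 2 / 2 * x ^ 2) (h1.sub h2) h3,
          integral_sub h1 h2, integral_const_mul, integral_const_mul, integral_const_mul,
          integral_id_gaussianReal, hsecond, integral_abs_pow_three_gaussianReal]
        ring

lemma eventually_integral_log_abs_one_add_mul_lt (a β : ℝ) {κ : ℝ} (hκ : κ < a + β ^ 2 / 2) :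
    ∀ᶠ τ in 𝓝[>] 0, 0 < 1 + τ * a ∧
      ∫ x, log |1 + β * x| ∂gaussianReal 0 τ.toNNReal < log (1 + τ * a) - κ * τ := by
  set C := 2 * |β| ^ 3 * ∫ x, |x| ^ 3 ∂gaussianReal 0 1
  have herr : Tendsto (fun τ => C * √τ + 2 * a ^ 2 * τ) (𝓝[>] 0) (𝓝 0) := by
    have : Continuous (fun τ => C * √τ + 2 * a ^ 2 * τ) := by fun_prop
    simpa using (this.tendsto 0).mono_left nhdsWithin_le_nhds
  have hτa : Tendsto (fun τ => τ * a) (𝓝[>] 0) (𝓝 0) := by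
    simpa using ((continuous_mul_const a).tendsto 0).mono_left nhdsWithin_le_nhds
  filter_upwards [self_mem_nhdsWithin, herr.eventually_lt_const (sub_pos.2 hκ),
    hτa.eventually (Icc_mem_nhds (by norm_num : -(1 / 2 : ℝ) < 0) (by norm_num : (0 : ℝ) < 1 / 2))]
    with τ (hτ : 0 < τ) hsmall ⟨hlo, hhi⟩
  have hmean := integral_log_abs_one_add_mul_gaussianReal_le β (Real.toNNReal_pos.2 hτ).ne'
  have hcube : √τ ^ 3 = τ * √τ := by rw [pow_succ, sq_sqrt hτ.le]
  rw [Real.coe_toNNReal _ hτ.le, hcube] at hmean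
  have hlog := (abs_le.1 (abs_log_one_add_sub_self_le (abs_le.2 ⟨hlo, hhi⟩))).1
  refine ⟨by linarith, ?_⟩
  nlinarith [mul_lt_mul_of_pos_left hsmall hτ]

lemma ae_tendsto_average_comp {Ω α : Type*} [MeasurableSpace Ω] [MeasurableSpace α]
    {P : Measure Ω} {μ : Measure α} {X : ℕ → Ω → α} (hX : ∀ n, Measurable (X n))
    (hlaw : ∀ n, P.map (X n) = μ) (hindep : Pairwise fun i j => IndepFun (X i) (X j) P)
    {f : α → ℝ} (hf : Measurable f) (hfi : Integrable f μ) :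
    ∀ᵐ ω ∂P, Tendsto (fun n : ℕ => (∑ j ∈ Finset.range n, f (X j ω)) / n) atTop
      (𝓝 (∫ x, f x ∂μ)) := by
  have hint : Integrable (f ∘ X 0) P := by
    rwa [← integrable_map_measure hf.aestronglyMeasurable (hX 0).aemeasurable, hlaw 0]
  have h := strong_law_ae_real (fun n => f ∘ X n) hint
    (fun i j hij => (hindep hij).comp hf hf)
    (fun i => (IdentDistrib.mk (hX i).aemeasurable (hX 0).aemeasurable
      (by rw [hlaw, hlaw])).comp hf)
  simp only [Function.comp_apply] at h
  rwa [← integral_map (hX 0).aemeasurable hf.aestronglyMeasurable, hlaw 0] at h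

lemma MutuallyIndepInit.pairwise_indepFun {Ω : Type*} [MeasurableSpace Ω] {N : ℕ}
    {P : Measure Ω} {Y₀ : Ω → EuclideanSpace ℝ (Fin N)} {ΔW : ℕ → Ω → ℝ}
    (h : MutuallyIndepInit P Y₀ ΔW) : Pairwise fun i j => IndepFun (ΔW i) (ΔW j) P :=
  fun i j hij => h.indepFun (i := some i) (j := some j) (Option.some_injective _ |>.ne hij)

lemma EuclideanSpace.norm_le_mul_norm_of_abs_le {ι : Type*} [Fintype ι]
    {x y : EuclideanSpace ℝ ι} {r : ℝ} (hr : 0 ≤ r) (h : ∀ k, |y k| ≤ r * |x k|) :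
    ‖y‖ ≤ r * ‖x‖ := by
  rw [← abs_of_nonneg hr, ← Real.norm_eq_abs, ← norm_smul, EuclideanSpace.norm_eq,
    EuclideanSpace.norm_eq]
  gcongr with k
  simpa [abs_mul, abs_of_nonneg hr] using h k

lemma norm_le_mul_exp_sum_of_norm_succ_le {E : Type*} [SeminormedAddCommGroup E] {y : ℕ → E}
    {x : ℕ → ℝ} (h : ∀ n, ‖y (n + 1)‖ ≤ exp (x n) * ‖y n‖) (n : ℕ) :
    ‖y n‖ ≤ ‖y 0‖ * exp (∑ j ∈ Finset.range n, x j) := by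
  induction n with
  | zero => simp
  | succ n ih =>
    calc ‖y (n + 1)‖ ≤ exp (x n) * ‖y n‖ := h n
      _ ≤ exp (x n) * (‖y 0‖ * exp (∑ j ∈ Finset.range n, x j)) := by gcongr
      _ = ‖y 0‖ * exp (∑ j ∈ Finset.range (n + 1), x j) := by
        rw [Finset.sum_range_succ, exp_add]; ring

lemma norm_le_mul_exp_sum_log_of_diagonal_recursion {ι : Type*} [Fintype ι]
    {Y : ℕ → EuclideanSpace ℝ ι} {w : ℕ → ℝ} {e : ι → ℝ} {d : ℝ} (hd : 0 < d)
    (hde : ∀ k, d ≤ e k) (hY : ∀ n k, Y (n + 1) k = (Y n k + w n * Y n k) / e k) (n : ℕ) :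
    ‖Y n‖ ≤ ‖Y 0‖ * exp (∑ j ∈ Finset.range n, (log |1 + w j| - log d)) := by
  refine norm_le_mul_exp_sum_of_norm_succ_le (fun n => ?_) n
  refine EuclideanSpace.norm_le_mul_norm_of_abs_le (exp_pos _).le fun k => ?_
  have he : 0 < e k := hd.trans_le (hde k)
  calc |Y (n + 1) k| = |1 + w n| / e k * |Y n k| := by
        rw [hY, show Y n k + w n * Y n k = (1 + w n) * Y n k by ring, abs_div, abs_mul,
          abs_of_pos he]
        ring
    _ ≤ |1 + w n| / d * |Y n k| := by gcongr; exact hde k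
    _ ≤ exp (log |1 + w n| - log d) * |Y n k| := by
        rw [exp_sub, exp_log hd]
        gcongr
        exact abs_le_exp_log_abs _

lemma bddAbove_range_sub_mul_of_tendsto_div {S : ℕ → ℝ} {m c : ℝ}
    (hS : Tendsto (fun n : ℕ => S n / n) atTop (𝓝 m)) (hmc : m < c) :
    BddAbove (range fun n : ℕ => S n - c * n) := by
  refine IsBoundedUnder.bddAbove_range (isBoundedUnder_of_eventually_le (a := 0) ?_)
  filter_upwards [hS.eventually_lt_const hmc, eventually_gt_atTop 0] with n hlt hn
  rw [div_lt_iff₀ (by exact_mod_cast hn)] at hlt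
  linarith

theorem discrete_as_exponential_stability_general
    (N : ℕ) (p β₀ β₁ lam1 : ℝ) (hp : 1 ≤ p)
    (lam : Fin N → ℝ) (hlam : ∀ k, lam1 ≤ lam k)
    (hcond : β₁ ^ 2 > 2 * (β₀ - lam1)) :
    ∃ τ₀ > (0 : ℝ), ∀ τ : ℝ, 0 < τ → τ < τ₀ →
      (∀ k : Fin N, 0 < 1 + τ * (lam k - β₀)) →
      ∀ (Ω : Type*) [MeasurableSpace Ω] (P : Measure Ω),
        IsProbabilityMeasure P →
        ∀ (ΔW : ℕ → Ω → ℝ) (Y₀ : Ω → EuclideanSpace ℝ (Fin N)),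
          (∀ n, Measurable (ΔW n)) →
          (∀ n, Measure.map (ΔW n) P = gaussianReal 0 τ.toNNReal) →
          Measurable Y₀ →
          MutuallyIndepInit P Y₀ ΔW →
          ∀ Y : ℕ → Ω → EuclideanSpace ℝ (Fin N),
            Y 0 = Y₀ →
            (∀ n ω k, Y (n + 1) ω k =
              (Y n ω k + β₁ * ΔW n ω * Y n ω k) / (1 + τ * (lam k - β₀))) →
            ∃ ξ : Ω → ℝ, (∀ ω, 0 ≤ ξ ω) ∧
              ∀ᵐ ω ∂P, ∀ n : ℕ,
                ‖Y n ω‖ ^ p ≤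
                  ξ ω * Real.exp
                    (-((p / 2 * β₁ ^ 2 + p * (lam1 - β₀)) / 4) * (n * τ)) := by
  set a := lam1 - β₀
  set κ := (a + β₁ ^ 2 / 2) / 4
  obtain ⟨τ₀, hτ₀, hsmall⟩ := mem_nhdsGT_iff_exists_Ioo_subset.1
    (eventually_integral_log_abs_one_add_mul_lt a β₁ (κ := κ) (by simp only [κ]; linarith))
  refine ⟨τ₀, hτ₀, fun τ hτ hττ₀ _ Ω _ P _ ΔW Y₀ hΔW hlaw _ hind Y hY₀ hY => ?_⟩
  obtain ⟨hd, hmean⟩ := hsmall ⟨hτ, hττ₀⟩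
  set c := log (1 + τ * a) - κ * τ
  set S : ℕ → Ω → ℝ := fun n ω => ∑ j ∈ Finset.range n, log |1 + β₁ * ΔW j ω|
  have hslln := ae_tendsto_average_comp hΔW hlaw hind.pairwise_indepFun
    (f := fun x => log |1 + β₁ * x|) (measurable_log.comp (by fun_prop))
    (integrable_log_abs_one_add_mul_gaussianReal 0 β₁ (Real.toNNReal_pos.2 hτ).ne')
  refine ⟨fun ω => ‖Y₀ ω‖ ^ p * exp (p * ⨆ n : ℕ, (S n ω - c * n)), fun ω => by positivity, ?_⟩
  filter_upwards [hslln] with ω hω n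
  have hbdd := bddAbove_range_sub_mul_of_tendsto_div hω hmean
  have hpath := norm_le_mul_exp_sum_log_of_diagonal_recursion (Y := fun n => Y n ω)
    (e := fun k => 1 + τ * (lam k - β₀)) hd (fun k => by nlinarith [hlam k])
    (fun n k => by rw [hY, mul_assoc]) n
  rw [Finset.sum_sub_distrib, Finset.sum_const, Finset.card_range, nsmul_eq_mul, hY₀] at hpath
  calc ‖Y n ω‖ ^ p ≤ (‖Y₀ ω‖ * exp (S n ω - n * log (1 + τ * a))) ^ p := by gcongr
    _ = ‖Y₀ ω‖ ^ p * exp (p * (S n ω - c * n))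
          * exp (-((p / 2 * β₁ ^ 2 + p * a) / 4) * (n * τ)) := by
        rw [mul_rpow (norm_nonneg _) (exp_pos _).le, ← exp_mul, mul_assoc, ← exp_add]
        congr 2
        simp only [c, κ]
        ring
    _ ≤ _ := by gcongr; exact le_ciSup hbdd n

/-- Discrete almost sure exponential stability of the fully discrete spectral
Galerkin / implicit Euler–Maruyama scheme
`Y_{n+1}(k) = (Y_n(k) + β₁ ΔW_n Y_n(k)) / (1 + τ (λ_k - β₀))` under the
noise-induced stabilization condition `β₁² > 2 (β₀ - λ₁)`: for all sufficiently
small step sizes `τ`, almost surely `‖Y_n‖^p ≤ ξ e^{-(μ_as/4) n τ}` for a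
finite random variable `ξ`, with `μ_as = (p/2) β₁² + p (λ₁ - β₀)`. -/
theorem discrete_as_exponential_stability
    (N : ℕ) (hN : 1 ≤ N) (p β₀ β₁ lam1 : ℝ) (hp : 1 ≤ p)
    (lam : Fin N → ℝ) (hlam : ∀ k, lam1 ≤ lam k)
    (hcond : β₁ ^ 2 > 2 * (β₀ - lam1)) :
    ∃ τ₀ > (0 : ℝ), ∀ τ : ℝ, 0 < τ → τ < τ₀ →
      (∀ k : Fin N, 0 < 1 + τ * (lam k - β₀)) →
      ∀ (Ω : Type*) [MeasurableSpace Ω] (P : Measure Ω),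
        IsProbabilityMeasure P →
        ∀ (ΔW : ℕ → Ω → ℝ) (Y₀ : Ω → EuclideanSpace ℝ (Fin N)),
          (∀ n, Measurable (ΔW n)) →
          (∀ n, Measure.map (ΔW n) P = gaussianReal 0 τ.toNNReal) →
          Measurable Y₀ →
          MutuallyIndepInit P Y₀ ΔW →
          ∀ Y : ℕ → Ω → EuclideanSpace ℝ (Fin N),
            Y 0 = Y₀ →
            (∀ n ω k, Y (n + 1) ω k =
              (Y n ω k + β₁ * ΔW n ω * Y n ω k) / (1 + τ * (lam k - β₀))) →
            ∃ ξ : Ω → ℝ, (∀ ω, 0 ≤ ξ ω) ∧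
              ∀ᵐ ω ∂P, ∀ n : ℕ,
                ‖Y n ω‖ ^ p ≤
                  ξ ω * Real.exp
                    (-((p / 2 * β₁ ^ 2 + p * (lam1 - β₀)) / 4) * (n * τ)) :=
  discrete_as_exponential_stability_general N p β₀ β₁ lam1 hp lam hlam hcond
end

section
/- Fix an integer N ≥ 1, reals β₀, β₁, λ₁ with λ₁ > β₀ and β₁² < 2(λ₁ − β₀), λ : Fin N → ℝ with λ_k ≥ λ₁ for all k, and an arbitrary step size τ > 0. On any probability space carrying a sequence (ΔW_n)_{n∈ℕ} of real random variables each with law gaussianReal 0 τ and a random variable Y₀ : Ω → ℝ^N with E(‖Y₀‖²) < ∞, such that the family (Y₀, ΔW₀, ΔW₁, …) is mutually independent, define recursively Y_{n+1}(k) = (Y_n(k) + β₁·ΔW_n·Y_n(k))/(1 + τ(λ_k − β₀)) for all n ∈ ℕ and k. Then, setting ρ(τ) = (1 + β₁²τ)/(1 + τ(λ₁ − β₀))², one has ρ(τ) < 1 and E(‖Y_n‖²) ≤ ρ(τ)^n·E(‖Y₀‖²) for all n ∈ ℕ. -/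
/-!
The scheme is diagonal: with `c_k = 1 + τ (λ_k - β₀)`, mode `k` is multiplied at step `n` by
`(1 + β₁ ΔW_n) / c_k`, so `‖Y_n‖² = g_n(Y₀) · ∏_{j<n} (1 + β₁ ΔW_j)²` where
`g_n(y) = ∑_k (y_k / c_k^n)²`. By independence the expectation factorises, each factor
`(1 + β₁ ΔW_j)²` has mean `1 + β₁² τ`, and `c_k ≥ c₁ = 1 + τ (λ₁ - β₀)` gives
`E g_n(Y₀) ≤ E‖Y₀‖² / c₁^{2n}`.
-/

open Real MeasureTheory ProbabilityTheory

open Finset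
open scoped NNReal

lemma eq_prod_mul_div_pow {a : ℕ → ℝ} {c : ℝ} {y : ℕ → ℝ} (h : ∀ n, y (n + 1) = a n * y n / c)
    (n : ℕ) : y n = (∏ j ∈ range n, a j) * (y 0 / c ^ n) := by
  induction n with
  | zero => simp
  | succ n ih => rw [h, ih, prod_range_succ, pow_succ]; ring

lemma EuclideanSpace.norm_sq_eq_of_diagonal_recursion {ι : Type*} [Fintype ι] {a : ℕ → ℝ}
    {c : ι → ℝ} {Y : ℕ → EuclideanSpace ℝ ι} (h : ∀ n k, Y (n + 1) k = a n * Y n k / c k)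
    (n : ℕ) : ‖Y n‖ ^ 2 = (∑ k, (Y 0 k / c k ^ n) ^ 2) * ∏ j ∈ range n, a j ^ 2 := by
  rw [EuclideanSpace.norm_sq_eq, sum_mul]
  refine sum_congr rfl fun k _ => ?_
  rw [Real.norm_eq_abs, sq_abs, eq_prod_mul_div_pow (y := fun m => Y m k) (h · k), prod_pow]
  ring

lemma EuclideanSpace.sum_sq_div_pow_le {ι : Type*} [Fintype ι] (y : EuclideanSpace ℝ ι)
    {c : ι → ℝ} {c₁ : ℝ} (hc₁ : 0 < c₁) (hc : ∀ k, c₁ ≤ c k) (n : ℕ) :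
    ∑ k, (y k / c k ^ n) ^ 2 ≤ ‖y‖ ^ 2 / (c₁ ^ n) ^ 2 := by
  rw [EuclideanSpace.norm_sq_eq, sum_div]
  refine sum_le_sum fun k _ => ?_
  rw [Real.norm_eq_abs, sq_abs, div_pow]
  gcongr
  exact hc k

lemma one_add_sq_mul_div_sq_lt_one {b d τ : ℝ} (hτ : 0 < τ) (h : b ^ 2 < 2 * d) :
    (1 + b ^ 2 * τ) / (1 + τ * d) ^ 2 < 1 := by
  have hd : 0 < d := by nlinarith [sq_nonneg b]
  rw [div_lt_one (by positivity)]
  nlinarith [mul_pos (sub_pos.2 h) hτ, sq_nonneg (τ * d)]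

lemma integral_one_add_mul_sq_gaussianReal (c : ℝ) (v : ℝ≥0) :
    ∫ x, (1 + c * x) ^ 2 ∂gaussianReal 0 v = 1 + c ^ 2 * v := by
  have h1 : Integrable (fun x : ℝ => x) (gaussianReal 0 v) :=
    (memLp_id_gaussianReal 1).integrable le_rfl
  have h2 : Integrable (fun x : ℝ => x ^ 2) (gaussianReal 0 v) :=
    (memLp_id_gaussianReal 2).integrable_sq
  have hmean : ∫ x, x ∂gaussianReal 0 v = 0 := integral_id_gaussianReal
  have hsq : ∫ x, x ^ 2 ∂gaussianReal 0 v = v := by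
    rw [← variance_of_integral_eq_zero aemeasurable_id' hmean, variance_fun_id_gaussianReal]
  calc ∫ x, (1 + c * x) ^ 2 ∂gaussianReal 0 v
      = ∫ x, (1 + 2 * c * x + c ^ 2 * x ^ 2) ∂gaussianReal 0 v := by congr with x; ring
    _ = 1 + c ^ 2 * v := by
      have h1' : Integrable (fun x : ℝ => 2 * c * x) (gaussianReal 0 v) := h1.const_mul _
      have h2' : Integrable (fun x : ℝ => c ^ 2 * x ^ 2) (gaussianReal 0 v) := h2.const_mul _
      rw [integral_add (f := fun x => 1 + 2 * c * x) ((integrable_const 1).add h1') h2',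
        integral_add (integrable_const 1) h1', integral_const_mul, integral_const_mul, hmean, hsq]
      simp

lemma ProbabilityTheory.iIndepFun.integral_finset_prod {Ω ι : Type*} [MeasurableSpace Ω]
    {P : Measure Ω} {X : ι → Ω → ℝ} (hX : iIndepFun X P)
    (mX : ∀ i, AEStronglyMeasurable (X i) P) (s : Finset ι) :
    ∫ ω, ∏ i ∈ s, X i ω ∂P = ∏ i ∈ s, ∫ ω, X i ω ∂P := by
  simp_rw [← Finset.prod_coe_sort s]
  exact (hX.precomp Subtype.val_injective).integral_fun_prod_eq_prod_integral fun i => mX i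

section

variable {Ω : Type*} [MeasurableSpace Ω] {P : Measure Ω} {N : ℕ}
  {Y₀ : Ω → EuclideanSpace ℝ (Fin N)} {ΔW : ℕ → Ω → ℝ}

lemma MutuallyIndepInit.iIndepFun_comp (hindep : MutuallyIndepInit P Y₀ ΔW)
    {g : EuclideanSpace ℝ (Fin N) → ℝ} {q : ℝ → ℝ} (hg : Measurable g) (hq : Measurable q) :
    iIndepFun (fun i => Option.elim i (g ∘ Y₀) fun j => q ∘ ΔW j) P := by
  convert hindep.comp (γ := fun _ => ℝ) (fun | none => g | some _ => q)
    (by rintro (_ | _) <;> assumption) with i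
  cases i <;> rfl

lemma MutuallyIndepInit.integral_mul_prod (hindep : MutuallyIndepInit P Y₀ ΔW)
    (hY₀ : AEMeasurable Y₀ P) (hΔW : ∀ n, AEMeasurable (ΔW n) P)
    {g : EuclideanSpace ℝ (Fin N) → ℝ} {q : ℝ → ℝ} (hg : Measurable g) (hq : Measurable q)
    (n : ℕ) :
    ∫ ω, g (Y₀ ω) * ∏ j ∈ range n, q (ΔW j ω) ∂P
      = (∫ ω, g (Y₀ ω) ∂P) * ∏ j ∈ range n, ∫ ω, q (ΔW j ω) ∂P := by
  have := (hindep.iIndepFun_comp hg hq).integral_finset_prod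
    (by rintro (_ | j); exacts [(hg.comp_aemeasurable hY₀).aestronglyMeasurable,
      (hq.comp_aemeasurable (hΔW j)).aestronglyMeasurable]) (insertNone (range n))
  simpa only [prod_insertNone, Option.elim_none, Option.elim_some, Function.comp_apply] using this

end

theorem discrete_mean_square_stability_general
    {Ω : Type*} [MeasurableSpace Ω] (P : Measure Ω) [IsProbabilityMeasure P]
    (N : ℕ) (β₀ β₁ lam1 : ℝ)
    (hcond : β₁ ^ 2 < 2 * (lam1 - β₀))
    (lam : Fin N → ℝ) (hlam : ∀ k, lam1 ≤ lam k)
    (τ : ℝ) (hτ : 0 < τ)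
    (ΔW : ℕ → Ω → ℝ)
    (hΔWlaw : ∀ n, Measure.map (ΔW n) P = gaussianReal 0 τ.toNNReal)
    (Y₀ : Ω → EuclideanSpace ℝ (Fin N)) (hY₀meas : Measurable Y₀)
    (hY₀int : Integrable (fun ω => ‖Y₀ ω‖ ^ 2) P)
    (hindep : MutuallyIndepInit P Y₀ ΔW)
    (Y : ℕ → Ω → EuclideanSpace ℝ (Fin N)) (hY0 : Y 0 = Y₀)
    (hYrec : ∀ n ω k, Y (n + 1) ω k =
      (Y n ω k + β₁ * ΔW n ω * Y n ω k) / (1 + τ * (lam k - β₀)))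
    : (1 + β₁ ^ 2 * τ) / (1 + τ * (lam1 - β₀)) ^ 2 < 1 ∧
      ∀ n : ℕ, ∫ ω, ‖Y n ω‖ ^ 2 ∂P ≤
        ((1 + β₁ ^ 2 * τ) / (1 + τ * (lam1 - β₀)) ^ 2) ^ n *
          ∫ ω, ‖Y₀ ω‖ ^ 2 ∂P := by
  refine ⟨one_add_sq_mul_div_sq_lt_one hτ hcond, fun n => ?_⟩
  have hc₁ : 0 < 1 + τ * (lam1 - β₀) := by nlinarith [sq_nonneg β₁]
  have hc : ∀ k, 1 + τ * (lam1 - β₀) ≤ 1 + τ * (lam k - β₀) := fun k => by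
    gcongr; exact hlam k
  have hΔW : ∀ j, AEMeasurable (ΔW j) P := fun j =>
    .of_map_ne_zero (by rw [hΔWlaw]; exact IsProbabilityMeasure.ne_zero _)
  have hfactor : ∀ j, ∫ ω, (1 + β₁ * ΔW j ω) ^ 2 ∂P = 1 + β₁ ^ 2 * τ := fun j => by
    rw [← integral_map (f := fun x => (1 + β₁ * x) ^ 2) (hΔW j) (by fun_prop), hΔWlaw,
      integral_one_add_mul_sq_gaussianReal, Real.coe_toNNReal _ hτ.le]
  set g : EuclideanSpace ℝ (Fin N) → ℝ := fun y => ∑ k, (y k / (1 + τ * (lam k - β₀)) ^ n) ^ 2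
  have hnorm : ∀ ω, ‖Y n ω‖ ^ 2 = g (Y₀ ω) * ∏ j ∈ range n, (1 + β₁ * ΔW j ω) ^ 2 := fun ω => by
    rw [← hY0, EuclideanSpace.norm_sq_eq_of_diagonal_recursion (Y := (Y · ω))
      (a := fun m => 1 + β₁ * ΔW m ω) (c := fun k => 1 + τ * (lam k - β₀))
      fun m k => by rw [hYrec]; ring]
  calc ∫ ω, ‖Y n ω‖ ^ 2 ∂P
      = (∫ ω, g (Y₀ ω) ∂P) * (1 + β₁ ^ 2 * τ) ^ n := by
        rw [integral_congr_ae (.of_forall hnorm),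
          hindep.integral_mul_prod hY₀meas.aemeasurable hΔW (by fun_prop)
            (q := fun x => (1 + β₁ * x) ^ 2) (by fun_prop),
          prod_congr rfl fun j _ => hfactor j, prod_const, card_range]
    _ ≤ (∫ ω, ‖Y₀ ω‖ ^ 2 / ((1 + τ * (lam1 - β₀)) ^ n) ^ 2 ∂P) * (1 + β₁ ^ 2 * τ) ^ n := by
        gcongr ?_ * _
        exact integral_mono_of_nonneg (.of_forall fun _ => by positivity) (hY₀int.div_const _)
          (.of_forall fun ω => (Y₀ ω).sum_sq_div_pow_le hc₁ hc n)
    _ = _ := by rw [integral_div, div_pow, ← pow_mul, ← pow_mul, mul_comm n 2]; ring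

/-- Exact mean-square (`p = 2`) discrete stability of the fully discrete
spectral Galerkin / implicit Euler–Maruyama scheme, valid unconditionally in
the step size `τ > 0`: if `λ₁ > β₀` and `β₁² < 2 (λ₁ - β₀)` then, with
`ρ(τ) = (1 + β₁² τ)/(1 + τ (λ₁ - β₀))²`, one has `ρ(τ) < 1` and
`E(‖Y_n‖²) ≤ ρ(τ)ⁿ E(‖Y₀‖²)` for all `n`. -/
theorem discrete_mean_square_stability
    {Ω : Type*} [MeasurableSpace Ω] (P : Measure Ω) [IsProbabilityMeasure P]
    (N : ℕ) (hN : 1 ≤ N) (β₀ β₁ lam1 : ℝ) (hdrift : β₀ < lam1)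
    (hcond : β₁ ^ 2 < 2 * (lam1 - β₀))
    (lam : Fin N → ℝ) (hlam : ∀ k, lam1 ≤ lam k)
    (τ : ℝ) (hτ : 0 < τ)
    (ΔW : ℕ → Ω → ℝ) (hΔWmeas : ∀ n, Measurable (ΔW n))
    (hΔWlaw : ∀ n, Measure.map (ΔW n) P = gaussianReal 0 τ.toNNReal)
    (Y₀ : Ω → EuclideanSpace ℝ (Fin N)) (hY₀meas : Measurable Y₀)
    (hY₀int : Integrable (fun ω => ‖Y₀ ω‖ ^ 2) P)
    (hindep : MutuallyIndepInit P Y₀ ΔW)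
    (Y : ℕ → Ω → EuclideanSpace ℝ (Fin N)) (hY0 : Y 0 = Y₀)
    (hYrec : ∀ n ω k, Y (n + 1) ω k =
      (Y n ω k + β₁ * ΔW n ω * Y n ω k) / (1 + τ * (lam k - β₀)))
    : (1 + β₁ ^ 2 * τ) / (1 + τ * (lam1 - β₀)) ^ 2 < 1 ∧
      ∀ n : ℕ, ∫ ω, ‖Y n ω‖ ^ 2 ∂P ≤
        ((1 + β₁ ^ 2 * τ) / (1 + τ * (lam1 - β₀)) ^ 2) ^ n *
          ∫ ω, ‖Y₀ ω‖ ^ 2 ∂P :=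
  discrete_mean_square_stability_general P N β₀ β₁ lam1 hcond lam hlam τ hτ ΔW hΔWlaw Y₀ hY₀meas
    hY₀int hindep Y hY0 hYrec
end

section
/- Let p ≥ 1 be real and β₀, β₁, λ ∈ ℝ with λ > β₀, and for τ > 0 set a(τ) = 1/(1 + τ(λ − β₀)). Then, as τ → 0⁺, a(τ)^p·∫ |1 + β₁·√τ·x|^p dγ(x) = 1 − (p(λ − β₀) − (p(p−1)/2)·β₁²)·τ + o(τ), where γ = gaussianReal 0 1; that is, the difference between the left-hand side and 1 − (p(λ − β₀) − (p(p−1)/2)β₁²)τ is little-o of τ as τ → 0 from the right. -/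
open Real MeasureTheory ProbabilityTheory Asymptotics Filter
open scoped Topology NNReal

/-!
The deterministic factor `(1 + τ (λ - β₀))^{-p}` is differentiable at `0` with derivative
`-p (λ - β₀)`. For the random factor, write `|1 + u|^p = 1 + p u + p (p - 1)/2 u² + R(u)`, where
`|R(u)| ≤ C (|u|³ + |u|^{p+3})`: near `0` by three nested mean value estimates on `(1 + u)^q`,
elsewhere by crude growth bounds. Integrating against a centred law of unit variance with all
moments finite gives `E |1 + s X|^p = 1 + p (p - 1)/2 s² + O(s³)`, so with `s = β₁ √τ` the
random factor has right derivative `p (p - 1)/2 β₁²` at `0`. The product rule concludes.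
-/

theorem abs_sub_le_mul_abs_of_hasDerivAt {f f' : ℝ → ℝ} {C t : ℝ}
    (hf : ∀ r, |r| ≤ |t| → HasDerivAt f (f' r) r) (hf' : ∀ r, |r| ≤ |t| → |f' r| ≤ C) :
    |f t - f 0| ≤ C * |t| := by
  have hball : ∀ r ∈ Metric.closedBall (0 : ℝ) |t|, |r| ≤ |t| := fun r hr => by
    simpa using hr
  simpa using (convex_closedBall (0 : ℝ) |t|).norm_image_sub_le_of_norm_hasDerivWithin_le
    (fun r hr => (hf r (hball r hr)).hasDerivWithinAt) (fun r hr => hf' r (hball r hr))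
    (Metric.mem_closedBall_self (abs_nonneg t)) (by simp)

theorem hasDerivAt_one_add_rpow (q : ℝ) {t : ℝ} (ht : 0 < 1 + t) :
    HasDerivAt (fun t => (1 + t) ^ q) (q * (1 + t) ^ (q - 1)) t := by
  simpa using ((hasDerivAt_id t).const_add 1).rpow_const (p := q) (Or.inl ht.ne')

theorem one_add_rpow_le_two_rpow_abs (q : ℝ) {t : ℝ} (ht : |t| ≤ 1 / 2) :
    (1 + t) ^ q ≤ 2 ^ |q| := by
  obtain ⟨hlo, hhi⟩ := abs_le.mp ht
  rcases le_or_gt 0 q with hq | hq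
  · calc (1 + t) ^ q ≤ 2 ^ q := rpow_le_rpow (by linarith) (by linarith) hq
      _ = 2 ^ |q| := by rw [abs_of_nonneg hq]
  · calc (1 + t) ^ q ≤ (2⁻¹ : ℝ) ^ q := rpow_le_rpow_of_nonpos (by norm_num) (by linarith) hq.le
      _ = 2 ^ |q| := by rw [abs_of_neg hq, inv_rpow (by norm_num), rpow_neg (by norm_num)]

theorem abs_one_add_rpow_sub_one_le (q : ℝ) {t : ℝ} (ht : |t| ≤ 1 / 2) :
    |(1 + t) ^ q - 1| ≤ |q| * 2 ^ |q - 1| * |t| := by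
  have hpos : ∀ r, |r| ≤ |t| → 0 < 1 + r := fun r hr => by
    linarith [(abs_le.mp (hr.trans ht)).1]
  simpa using abs_sub_le_mul_abs_of_hasDerivAt
    (fun r hr => hasDerivAt_one_add_rpow q (hpos r hr))
    (fun r hr => by
      rw [abs_mul, abs_of_pos (rpow_pos_of_pos (hpos r hr) _)]
      exact mul_le_mul_of_nonneg_left (one_add_rpow_le_two_rpow_abs _ (hr.trans ht))
        (abs_nonneg q))

theorem abs_one_add_rpow_sub_linear_le (q : ℝ) {t : ℝ} (ht : |t| ≤ 1 / 2) :
    |(1 + t) ^ q - (1 + q * t)| ≤ |q * (q - 1)| * 2 ^ |q - 2| * t ^ 2 := by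
  have hpos : ∀ r, |r| ≤ |t| → 0 < 1 + r := fun r hr => by
    linarith [(abs_le.mp (hr.trans ht)).1]
  have key := abs_sub_le_mul_abs_of_hasDerivAt (t := t) (C := |q * (q - 1)| * 2 ^ |q - 2| * |t|)
    (f := fun t => (1 + t) ^ q - (1 + q * t)) (f' := fun r => q * ((1 + r) ^ (q - 1) - 1))
    (fun r hr => ((hasDerivAt_one_add_rpow q (hpos r hr)).fun_sub
      (((hasDerivAt_id' r).const_mul q).const_add 1)).congr_deriv (by ring))
    (fun r hr => by
      have h1 := abs_one_add_rpow_sub_one_le (q - 1) (hr.trans ht)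
      rw [sub_sub, one_add_one_eq_two] at h1
      calc |q * ((1 + r) ^ (q - 1) - 1)| = |q| * |(1 + r) ^ (q - 1) - 1| := abs_mul _ _
        _ ≤ |q| * (|q - 1| * 2 ^ |q - 2| * |t|) := by gcongr; exact h1.trans (by gcongr)
        _ = _ := by rw [abs_mul]; ring)
  simpa [sq_abs, mul_assoc, ← sq] using key

theorem abs_one_add_rpow_sub_quadratic_le (q : ℝ) {t : ℝ} (ht : |t| ≤ 1 / 2) :
    |(1 + t) ^ q - (1 + q * t + q * (q - 1) / 2 * t ^ 2)| ≤
      |q * (q - 1) * (q - 2)| * 2 ^ |q - 3| * |t| ^ 3 := by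
  have hpos : ∀ r, |r| ≤ |t| → 0 < 1 + r := fun r hr => by
    linarith [(abs_le.mp (hr.trans ht)).1]
  have key := abs_sub_le_mul_abs_of_hasDerivAt (t := t)
    (C := |q * (q - 1) * (q - 2)| * 2 ^ |q - 3| * |t| ^ 2)
    (f := fun t => (1 + t) ^ q - (1 + q * t + q * (q - 1) / 2 * t ^ 2))
    (f' := fun r => q * ((1 + r) ^ (q - 1) - (1 + (q - 1) * r)))
    (fun r hr => ((hasDerivAt_one_add_rpow q (hpos r hr)).fun_sub
      ((((hasDerivAt_id' r).const_mul q).const_add 1).fun_add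
        ((hasDerivAt_pow 2 r).const_mul (q * (q - 1) / 2)))).congr_deriv (by ring))
    (fun r hr => by
      have h1 := abs_one_add_rpow_sub_linear_le (q - 1) (hr.trans ht)
      rw [show q - 1 - 1 = q - 2 by ring, show q - 1 - 2 = q - 3 by ring, ← sq_abs r] at h1
      calc |q * ((1 + r) ^ (q - 1) - (1 + (q - 1) * r))|
          = |q| * |(1 + r) ^ (q - 1) - (1 + (q - 1) * r)| := abs_mul _ _
        _ ≤ |q| * (|(q - 1) * (q - 2)| * 2 ^ |q - 3| * |t| ^ 2) := by
            gcongr; exact h1.trans (by gcongr)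
        _ = _ := by rw [abs_mul, abs_mul, abs_mul]; ring)
  convert key using 1
  · simp
  · ring

noncomputable def absRpowRem (p u : ℝ) : ℝ :=
  |1 + u| ^ p - (1 + p * u + p * (p - 1) / 2 * u ^ 2)

theorem abs_absRpowRem_le_of_abs_le_half (p : ℝ) {u : ℝ} (hu : |u| ≤ 1 / 2) :
    |absRpowRem p u| ≤ |p * (p - 1) * (p - 2)| * 2 ^ |p - 3| * |u| ^ 3 := by
  rw [absRpowRem, abs_of_pos (by linarith [(abs_le.mp hu).1] : 0 < 1 + u)]
  exact abs_one_add_rpow_sub_quadratic_le p hu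

theorem abs_absRpowRem_le_of_half_le_abs {p : ℝ} (hp : 0 ≤ p) {u : ℝ} (hu : 1 / 2 ≤ |u|) :
    |absRpowRem p u| ≤ (8 + 4 * p + |p * (p - 1)|) * |u| ^ 3 + 8 * 3 ^ p * |u| ^ (p + 3) := by
  have hu0 : 0 < |u| := by linarith
  have hcube : 1 ≤ 8 * |u| ^ 3 := by nlinarith [pow_le_pow_left₀ (by norm_num) hu 3]
  have hlin : |p * u| ≤ 4 * p * |u| ^ 3 := by
    rw [abs_mul, abs_of_nonneg hp]
    have hsq : 1 ≤ 4 * |u| ^ 2 := by nlinarith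
    nlinarith [mul_le_mul_of_nonneg_left hsq (mul_nonneg hp hu0.le)]
  have hquad : |p * (p - 1) / 2 * u ^ 2| ≤ |p * (p - 1)| * |u| ^ 3 := by
    rw [abs_mul, abs_div, abs_two, abs_pow]
    nlinarith [mul_le_mul_of_nonneg_left hcube
      (mul_nonneg (abs_nonneg (p * (p - 1))) (sq_nonneg |u|))]
  have hpow : |1 + u| ^ p ≤ 8 * 3 ^ p * |u| ^ (p + 3) := by
    have hbase : |1 + u| ≤ 3 * |u| := by
      linarith [abs_add_le 1 u, abs_one (α := ℝ)]
    calc |1 + u| ^ p ≤ (3 * |u|) ^ p := rpow_le_rpow (abs_nonneg _) hbase hp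
      _ = 3 ^ p * |u| ^ p * 1 := by rw [mul_rpow (by norm_num) hu0.le, mul_one]
      _ ≤ 3 ^ p * |u| ^ p * (8 * |u| ^ 3) := by gcongr
      _ = 8 * 3 ^ p * |u| ^ (p + 3) := by
        rw [rpow_add hu0, ← rpow_natCast, Nat.cast_ofNat]
        ring
  calc |absRpowRem p u|
      ≤ |1 + u| ^ p + (1 + |p * u| + |p * (p - 1) / 2 * u ^ 2|) := by
        rw [absRpowRem]
        refine (abs_sub _ _).trans (add_le_add (abs_of_nonneg (by positivity)).le ?_)
        exact (abs_add_le _ _).trans (by gcongr; exact (abs_add_le _ _).trans (by simp))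
    _ ≤ _ := by linarith

theorem exists_abs_absRpowRem_le {p : ℝ} (hp : 0 ≤ p) :
    ∃ C, 0 ≤ C ∧ ∀ u, |absRpowRem p u| ≤ C * (|u| ^ 3 + |u| ^ (p + 3)) := by
  set K : ℝ := |p * (p - 1) * (p - 2)| * 2 ^ |p - 3|
  set A : ℝ := 8 + 4 * p + |p * (p - 1)|
  set B : ℝ := 8 * 3 ^ p
  have hK : 0 ≤ K := by positivity
  have hA : 0 ≤ A := by positivity
  have hB : 0 ≤ B := by positivity
  refine ⟨K + A + B, by positivity, fun u => ?_⟩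
  have h3 : 0 ≤ |u| ^ 3 := by positivity
  have hp3 : 0 ≤ |u| ^ (p + 3) := by positivity
  rcases le_total |u| (1 / 2) with hu | hu
  · nlinarith [abs_absRpowRem_le_of_abs_le_half p hu]
  · nlinarith [abs_absRpowRem_le_of_half_le_abs hp hu]

theorem measurable_absRpowRem (p : ℝ) : Measurable (absRpowRem p) := by
  unfold absRpowRem; fun_prop

section Moments

variable {μ : Measure ℝ} {p : ℝ}

theorem integrable_abs_rpow_of_memLp {r : ℝ} (hr : 0 < r) (h : MemLp id (ENNReal.ofReal r) μ) :
    Integrable (fun x => |x| ^ r) μ := by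
  simpa [hr, hr.le] using h.integrable_norm_rpow (by simpa using hr) ENNReal.ofReal_ne_top

theorem integrable_absRpowRem_comp_mul (hp : 0 ≤ p)
    (h3 : Integrable (fun x => |x| ^ 3) μ) (hp3 : Integrable (fun x => |x| ^ (p + 3)) μ) (s : ℝ) :
    Integrable (fun x => absRpowRem p (s * x)) μ := by
  obtain ⟨C, -, hC⟩ := exists_abs_absRpowRem_le hp
  refine ((h3.const_mul (C * |s| ^ 3)).fun_add (hp3.const_mul (C * |s| ^ (p + 3)))).mono'
    ((measurable_absRpowRem p).comp (measurable_const_mul s)).aestronglyMeasurable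
    (ae_of_all _ fun x => (hC (s * x)).trans_eq ?_)
  rw [abs_mul, mul_pow, mul_rpow (abs_nonneg _) (abs_nonneg _)]
  ring

theorem isBigO_integral_absRpowRem_comp_mul (hp : 0 ≤ p)
    (h3 : Integrable (fun x => |x| ^ 3) μ) (hp3 : Integrable (fun x => |x| ^ (p + 3)) μ) :
    (fun s => ∫ x, absRpowRem p (s * x) ∂μ) =O[𝓝 0] (fun s => s ^ 3) := by
  obtain ⟨C, hC0, hC⟩ := exists_abs_absRpowRem_le hp
  have hdom : ∀ s, |s| ≤ 1 → ∀ x,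
      |absRpowRem p (s * x)| ≤ C * |s| ^ 3 * (|x| ^ 3 + |x| ^ (p + 3)) := by
    intro s hs x
    have hsp : |s| ^ (p + 3) ≤ |s| ^ 3 := by
      simpa using rpow_le_rpow_of_exponent_ge' (abs_nonneg s) hs (by norm_num : (0 : ℝ) ≤ 3)
        (by linarith : (3 : ℝ) ≤ p + 3)
    calc |absRpowRem p (s * x)| ≤ C * (|s * x| ^ 3 + |s * x| ^ (p + 3)) := hC _
      _ = C * (|s| ^ 3 * |x| ^ 3 + |s| ^ (p + 3) * |x| ^ (p + 3)) := by
        rw [abs_mul, mul_pow, mul_rpow (abs_nonneg _) (abs_nonneg _)]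
      _ ≤ C * (|s| ^ 3 * |x| ^ 3 + |s| ^ 3 * |x| ^ (p + 3)) := by gcongr
      _ = _ := by ring
  refine IsBigO.of_bound (C * ∫ x, (|x| ^ 3 + |x| ^ (p + 3)) ∂μ) ?_
  filter_upwards [Metric.closedBall_mem_nhds (0 : ℝ) one_pos] with s hs
  have hs' : |s| ≤ 1 := by simpa using hs
  refine (norm_integral_le_of_norm_le ((h3.fun_add hp3).const_mul (C * |s| ^ 3))
    (ae_of_all _ (hdom s hs'))).trans_eq ?_
  rw [integral_const_mul, norm_pow, Real.norm_eq_abs, mul_right_comm C]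

theorem isBigO_integral_abs_one_add_mul_rpow [IsProbabilityMeasure μ] (hp : 0 ≤ p)
    (hμ : ∀ q : ℝ≥0, MemLp id q μ) (hmean : ∫ x, x ∂μ = 0) (hvar : ∫ x, x ^ 2 ∂μ = 1) :
    (fun s => ∫ x, |1 + s * x| ^ p ∂μ - (1 + p * (p - 1) / 2 * s ^ 2)) =O[𝓝 0]
      (fun s => s ^ 3) := by
  have h3 : Integrable (fun x => |x| ^ 3) μ := by
    simpa using integrable_abs_rpow_of_memLp (by norm_num) (hμ (Real.toNNReal 3))
  have hp3 : Integrable (fun x => |x| ^ (p + 3)) μ :=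
    integrable_abs_rpow_of_memLp (by linarith) (hμ _)
  refine (isBigO_integral_absRpowRem_comp_mul hp h3 hp3).congr_left fun s => ?_
  have h1 : Integrable (fun x => x) μ := (hμ 1).integrable le_rfl
  have h2 : Integrable (fun x => x ^ 2) μ := (hμ 2).integrable_sq
  have hR := integrable_absRpowRem_comp_mul hp h3 hp3 s
  have hlin : Integrable (fun x => p * s * x + p * (p - 1) / 2 * s ^ 2 * x ^ 2) μ :=
    (h1.const_mul _).fun_add (h2.const_mul _)
  have hpoly : ∫ x, (1 + (p * s * x + p * (p - 1) / 2 * s ^ 2 * x ^ 2)) ∂μ =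
      1 + p * (p - 1) / 2 * s ^ 2 := by
    rw [integral_add (integrable_const 1) hlin, integral_add (h1.const_mul _) (h2.const_mul _),
      integral_const_mul, integral_const_mul, hmean, hvar]
    simp
  rw [eq_sub_iff_add_eq, ← hpoly, ← integral_add hR ((integrable_const 1).fun_add hlin)]
  congr with x
  rw [absRpowRem]
  ring

end Moments

theorem integral_sq_gaussianReal_zero (v : ℝ≥0) : ∫ x, x ^ 2 ∂gaussianReal 0 v = v := by
  have := variance_fun_id_gaussianReal (μ := 0) (v := v)
  simpa only [variance_eq_integral measurable_id'.aemeasurable, integral_id_gaussianReal,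
    sub_zero] using this

theorem hasDerivWithinAt_comp_mul_sqrt {g : ℝ → ℝ} {a b : ℝ}
    (hg : (fun s => g s - (a + b * s ^ 2)) =O[𝓝 0] (fun s => s ^ 3)) (c : ℝ) :
    HasDerivWithinAt (fun τ => g (c * √τ)) (b * c ^ 2) (Set.Ioi 0) 0 := by
  have hg0 : g 0 = a := by
    simpa [sub_eq_zero] using hg.eq_zero_imp.self_of_nhds
  have hs : Tendsto (fun τ => c * √τ) (𝓝[>] 0) (𝓝 0) := by
    have hcont : Continuous fun τ => c * √τ := by fun_prop
    simpa using (hcont.tendsto 0).mono_left nhdsWithin_le_nhds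
  have hsq : (fun τ => (c * √τ) ^ 2) =ᶠ[𝓝[>] 0] fun τ => c ^ 2 * τ :=
    eventually_mem_nhdsWithin.mono fun τ (hτ : 0 < τ) => by
      beta_reduce; rw [mul_pow, sq_sqrt hτ.le]
  have hcube : (fun τ => (c * √τ) ^ 3) =o[𝓝[>] 0] fun τ => τ := by
    have := ((isBigO_const_mul_self (c ^ 2) (fun τ => τ) _).congr' hsq.symm
      EventuallyEq.rfl).mul_isLittleO ((isLittleO_one_iff ℝ).mpr hs)
    simpa [← pow_succ] using this
  rw [hasDerivWithinAt_iff_isLittleO]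
  refine ((hg.comp_tendsto hs).trans_isLittleO hcube).congr' ?_ (by simp)
  filter_upwards [hsq] with τ hτ
  simp only [Function.comp_apply, hτ, sqrt_zero, mul_zero, hg0, sub_zero, smul_eq_mul]
  ring

theorem hasDerivAt_one_div_one_add_mul_rpow (c p : ℝ) :
    HasDerivAt (fun τ => (1 / (1 + τ * c)) ^ p) (-(p * c)) 0 := by
  have h : HasDerivAt (fun τ => 1 / (1 + τ * c)) (-c) 0 := by
    simpa using (((hasDerivAt_id' 0).mul_const c).const_add 1).fun_inv (by simp)
  simpa [mul_comm] using h.rpow_const (p := p) (Or.inl (by simp))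

theorem one_step_amplification_factor_expansion_general
    (p : ℝ) (hp : 1 ≤ p) (β₀ β₁ lam : ℝ) :
    (fun τ : ℝ =>
        (1 / (1 + τ * (lam - β₀))) ^ p *
            (∫ x, |1 + β₁ * Real.sqrt τ * x| ^ p ∂(gaussianReal 0 1)) -
          (1 - (p * (lam - β₀) - p * (p - 1) / 2 * β₁ ^ 2) * τ))
      =o[nhdsWithin 0 (Set.Ioi 0)] (fun τ : ℝ => τ) := by
  have hmoment := isBigO_integral_abs_one_add_mul_rpow (μ := gaussianReal 0 1) (by linarith)
    memLp_id_gaussianReal integral_id_gaussianReal (by simpa using integral_sq_gaussianReal_zero 1)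
  have hA := hasDerivAt_one_div_one_add_mul_rpow (lam - β₀) p
  have hB := hasDerivWithinAt_comp_mul_sqrt hmoment β₁
  have hAB := hA.hasDerivWithinAt.mul hB
  rw [hasDerivWithinAt_iff_isLittleO] at hAB
  refine hAB.congr' (Eventually.of_forall fun τ => ?_) (by simp)
  simp only [one_div, Pi.mul_apply, zero_mul, add_zero, inv_one, one_rpow, sqrt_zero, mul_zero,
    abs_one, integral_const, probReal_univ, smul_eq_mul, mul_one, sub_zero, div_self, one_mul,
    ne_eq, one_ne_zero, not_false_eq_true]
  ring

/-- First-order expansion of the one-step `p`-th moment amplification factor of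
the implicit Euler–Maruyama scheme: with `a(τ) = 1/(1 + τ (λ - β₀))` and
`γ = N(0, 1)`,
`a(τ)^p ∫ |1 + β₁ √τ x|^p dγ(x)
  = 1 - (p (λ - β₀) - (p (p-1)/2) β₁²) τ + o(τ)` as `τ → 0⁺`. -/
theorem one_step_amplification_factor_expansion
    (p : ℝ) (hp : 1 ≤ p) (β₀ β₁ lam : ℝ) (hdrift : β₀ < lam) :
    (fun τ : ℝ =>
        (1 / (1 + τ * (lam - β₀))) ^ p *
            (∫ x, |1 + β₁ * Real.sqrt τ * x| ^ p ∂(gaussianReal 0 1)) -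
          (1 - (p * (lam - β₀) - p * (p - 1) / 2 * β₁ ^ 2) * τ))
      =o[nhdsWithin 0 (Set.Ioi 0)] (fun τ : ℝ => τ) :=
  one_step_amplification_factor_expansion_general p hp β₀ β₁ lam
end
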